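/- arXiv:1607.00062 — 2 statements merged into one kernel-verified Lean document; each statement's English description precedes it below -/
import Mathlib

section
/- Let A be a Noetherian commutative ring, let T be a Noetherian A-algebra, and let I ⊆ T be an ideal such that the composition A → T → T/I is finite (T/I is a finitely generated A-module). Let y_1, ..., y_n be generators of the ideal I. Then the A-algebra homomorphism A[x_1, ..., x_n] → T sending x_i to y_i induces a ring homomorphism from the power series ring A[[x_1, ..., x_n]] to the I-adic completion T̂ = lim_t T/I^t, and this ring homomorphism is finite: T̂ is a finitely generated module over A[[x_1, ..., x_n]]. -/
/-!
Evaluating the truncations `∑_{|d| < t} F_d y^d` of a power series `F` modulo `I^t` gives a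
compatible family, hence the homomorphism `f : A[[x]] → T̂`. The ideal `K = (x₁, …, xₙ)` extends
along `f` to `I T̂`, so `T̂` is `K`-adically Hausdorff as an `A[[x]]`-module, and
`T̂ / K T̂ = T̂ / I T̂ = T / I` is spanned over `A` by lifts `g_j` of generators of `T / I`. Since
`A[[x]]` is `K`-adically complete, the complete Nakayama lemma shows that the `g_j` span `T̂`.
-/

instance IsPrecomplete.pi {R : Type*} [CommRing R] {I : Ideal R} {ι : Type*} [Finite ι]
    {M : ι → Type*} [∀ i, AddCommGroup (M i)] [∀ i, Module R (M i)]
    [∀ i, IsPrecomplete I (M i)] : IsPrecomplete I (∀ i, M i) := by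
  classical
  have := Fintype.ofFinite ι
  rw [← AdicCompletion.of_surjective_iff]
  intro x
  choose r hr using fun i => AdicCompletion.of_surjective I (M i) (AdicCompletion.pi I M x i)
  refine ⟨r, (AdicCompletion.piEquivOfFintype I M).injective ?_⟩
  funext i
  rw [AdicCompletion.piEquivOfFintype_apply, AdicCompletion.piEquivOfFintype_apply, ← hr]
  simp only [AdicCompletion.pi, LinearMap.pi_apply, AdicCompletion.map_of, LinearMap.proj_apply]

theorem Submodule.span_range_eq_top_of_isPrecomplete {R M : Type*} [CommRing R] [AddCommGroup M]
    [Module R M] {K : Ideal R} [IsPrecomplete K R] [IsHausdorff K M] {ι : Type*} [Finite ι]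
    (g : ι → M) (h : span R (Set.range g) ⊔ K • ⊤ = ⊤) : span R (Set.range g) = ⊤ := by
  have := Fintype.ofFinite ι
  rw [← Fintype.range_linearCombination, LinearMap.range_eq_top]
  refine surjective_of_mkQ_comp_surjective (I := K) fun x => ?_
  obtain ⟨x, rfl⟩ := Submodule.mkQ_surjective _ x
  obtain ⟨s, hs, k, hk, rfl⟩ := Submodule.mem_sup.1 (h ▸ Submodule.mem_top : x ∈ _)
  rw [← Fintype.range_linearCombination] at hs
  obtain ⟨c, rfl⟩ := hs
  refine ⟨c, ?_⟩
  simpa [Submodule.Quotient.eq] using hk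

namespace AdicCompletion

variable {R S : Type*} [CommRing R] [CommRing S] {I : Ideal S}

lemma map_pow_le_ker_evalₐ {φ : R →+* AdicCompletion I S} {K : Ideal R}
    (h : K.map φ ≤ I.map (algebraMap S _)) (t : ℕ) :
    (K ^ t).map φ ≤ RingHom.ker (evalₐ I t) := by
  rw [Ideal.map_pow]
  refine (Ideal.pow_right_mono h t).trans ?_
  rw [← Ideal.map_pow, Ideal.map_le_iff_le_comap]
  intro x hx
  simp [RingHom.mem_ker, algebraMap_apply, Ideal.Quotient.eq_zero_iff_mem.2 hx]

lemma isHausdorff_of_map_le [Algebra R (AdicCompletion I S)] {K : Ideal R}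
    (h : K.map (algebraMap R (AdicCompletion I S)) ≤ I.map (algebraMap S _)) :
    IsHausdorff K (AdicCompletion I S) := by
  refine ⟨fun x hx => ext_evalₐ fun t => ?_⟩
  have hxt : x ∈ (K ^ t • ⊤ : Submodule R _) := by simpa [SModEq.zero] using hx t
  rw [Ideal.smul_top_eq_map] at hxt
  rw [_root_.map_zero]
  exact map_pow_le_ker_evalₐ h t hxt

end AdicCompletion

lemma MvPolynomial.idealOfVars_pow_le_comap_aeval {σ A T : Type*} [CommRing A] [CommRing T]
    [Algebra A T] {I : Ideal T} {y : σ → T} (hy : ∀ i, y i ∈ I) (t : ℕ) :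
    idealOfVars σ A ^ t ≤ (I ^ t).comap (aeval y) := by
  rw [← Ideal.map_le_iff_le_comap, Ideal.map_pow]
  refine Ideal.pow_right_mono ?_ t
  rw [Ideal.map_span, Ideal.span_le]
  rintro _ ⟨_, ⟨i, rfl⟩, rfl⟩
  simpa using hy i

namespace MvPowerSeries

open MvPolynomial (idealOfVars idealOfVars_pow_le_comap_aeval)

variable {σ A T : Type*} [Finite σ] [CommRing A] [CommRing T] [Algebra A T] {I : Ideal T}
  {y : σ → T}

variable (y) in
noncomputable def aevalTruncTotal (hy : ∀ i, y i ∈ I) (t : ℕ) :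
    MvPowerSeries σ A →+* T ⧸ I ^ t :=
  (Ideal.quotientMap (I ^ t) (MvPolynomial.aeval y).toRingHom
    (idealOfVars_pow_le_comap_aeval hy t)).comp (truncTotalAlgHom σ A t).toRingHom

lemma aevalTruncTotal_apply (hy : ∀ i, y i ∈ I) (t : ℕ) (F : MvPowerSeries σ A) :
    aevalTruncTotal y hy t F = Ideal.Quotient.mk _ (MvPolynomial.aeval y (truncTotal t F)) :=
  rfl

lemma factorPow_comp_aevalTruncTotal (hy : ∀ i, y i ∈ I) {m n : ℕ} (hle : m ≤ n) :
    (Ideal.Quotient.factorPow I hle).comp (aevalTruncTotal (A := A) y hy n) =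
      aevalTruncTotal y hy m := by
  ext F
  rw [RingHom.comp_apply, aevalTruncTotal_apply, aevalTruncTotal_apply,
    Ideal.Quotient.factor_mk, Ideal.Quotient.eq, ← map_sub]
  exact idealOfVars_pow_le_comap_aeval hy m
    (truncTotal_sub_truncTotal_mem_pow_idealOfVars hle le_rfl F)

variable (y) in
noncomputable def aevalAdicCompletion (hy : ∀ i, y i ∈ I) :
    MvPowerSeries σ A →+* AdicCompletion I T :=
  AdicCompletion.liftRingHom I (aevalTruncTotal y hy) (factorPow_comp_aevalTruncTotal hy)

variable (hy : ∀ i, y i ∈ I)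

lemma evalₐ_aevalAdicCompletion (t : ℕ) (F : MvPowerSeries σ A) :
    AdicCompletion.evalₐ I t (aevalAdicCompletion y hy F) =
      Ideal.Quotient.mk _ (MvPolynomial.aeval y (truncTotal t F)) :=
  AdicCompletion.evalₐ_liftRingHom _ _ (factorPow_comp_aevalTruncTotal hy) t F

lemma aevalAdicCompletion_coe (p : MvPolynomial σ A) :
    aevalAdicCompletion y hy (p : MvPowerSeries σ A) =
      algebraMap T _ (MvPolynomial.aeval y p) := by
  refine AdicCompletion.ext_evalₐ fun t => ?_
  have htrunc : truncTotal t (p : MvPowerSeries σ A) - p ∈ idealOfVars σ A ^ t := by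
    rw [MvPolynomial.mem_pow_idealOfVars_iff']
    intro d hd
    rw [MvPolynomial.coeff_sub, coeff_truncTotal _ hd, MvPolynomial.coeff_coe, sub_self]
  rw [evalₐ_aevalAdicCompletion, AdicCompletion.algebraMap_apply, Algebra.algebraMap_self,
    RingHom.id_apply, AdicCompletion.evalₐ_of, Ideal.Quotient.eq, ← map_sub]
  exact idealOfVars_pow_le_comap_aeval hy t htrunc

lemma aevalAdicCompletion_C (a : A) :
    aevalAdicCompletion y hy (C a) = algebraMap T _ (algebraMap A T a) := by
  simpa using aevalAdicCompletion_coe hy (MvPolynomial.C a)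

lemma aevalAdicCompletion_X (i : σ) :
    aevalAdicCompletion y hy (X i : MvPowerSeries σ A) = algebraMap T _ (y i) := by
  simpa using aevalAdicCompletion_coe hy (MvPolynomial.X i)

lemma map_span_X_aevalAdicCompletion :
    (Ideal.span (Set.range (X : σ → MvPowerSeries σ A))).map (aevalAdicCompletion y hy) =
      (Ideal.span (Set.range y)).map (algebraMap T (AdicCompletion I T)) := by
  simp only [Ideal.map_span, ← Set.range_comp]
  congr 2
  funext i
  exact aevalAdicCompletion_X hy i

lemma evalₐ_aevalAdicCompletion_eq_zero {t : ℕ} {F : MvPowerSeries σ A}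
    (hF : F ∈ Ideal.span (Set.range (X : σ → MvPowerSeries σ A)) ^ t) :
    AdicCompletion.evalₐ I t (aevalAdicCompletion y hy F) = 0 := by
  refine AdicCompletion.map_pow_le_ker_evalₐ ?_ t (Ideal.mem_map_of_mem _ hF)
  rw [map_span_X_aevalAdicCompletion]
  exact Ideal.map_mono (Ideal.span_le.2 (Set.range_subset_iff.2 hy))

theorem aevalAdicCompletion_finite (hI : I ≤ Ideal.span (Set.range y))
    [Module.Finite A (T ⧸ I)] :
    (aevalAdicCompletion (A := A) y hy).Finite := by
  let := (aevalAdicCompletion (A := A) y hy).toAlgebra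
  have hspan : Ideal.span (Set.range y) = I :=
    le_antisymm (Ideal.span_le.2 (Set.range_subset_iff.2 hy)) hI
  set K := Ideal.span (Set.range (X : σ → MvPowerSeries σ A))
  have hK : K.map (algebraMap _ (AdicCompletion I T)) = I.map (algebraMap T _) := by
    rw [RingHom.algebraMap_toAlgebra, map_span_X_aevalAdicCompletion, hspan]
  have := AdicCompletion.isHausdorff_of_map_le hK.le
  obtain ⟨m, gbar, hgbar⟩ := Module.Finite.exists_fin (R := A) (M := T ⧸ I)
  choose g hg using fun j => Ideal.Quotient.mk_surjective (gbar j)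
  refine Module.finite_def.2 (Submodule.fg_def.2 ⟨_, Set.finite_range (algebraMap T _ ∘ g),
    Submodule.span_range_eq_top_of_isPrecomplete (K := K) _ (eq_top_iff.2 fun z _ => ?_)⟩)
  obtain ⟨c, hc⟩ := (Submodule.mem_span_range_iff_exists_fun A).1
    (hgbar ▸ Submodule.mem_top : AdicCompletion.evalOneₐ I z ∈ Submodule.span A (Set.range gbar))
  set w := ∑ j, (C (c j) : MvPowerSeries σ A) • algebraMap T (AdicCompletion I T) (g j)
  have hw : w ∈ Submodule.span (MvPowerSeries σ A) (Set.range (algebraMap T _ ∘ g)) :=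
    Submodule.sum_mem _ fun j _ => Submodule.smul_mem _ _ (Submodule.subset_span ⟨j, rfl⟩)
  have hzw : z - w ∈ K • (⊤ : Submodule (MvPowerSeries σ A) (AdicCompletion I T)) := by
    rw [Ideal.smul_top_eq_map, hK, ← AdicCompletion.ker_evalOneₐ_eq_map,
      Submodule.restrictScalars_mem, RingHom.mem_ker]
    · rw [AlgHom.toRingHom_eq_coe, RingHom.coe_coe, map_sub, ← hc, sub_eq_zero, eq_comm]
      simp [w, Algebra.smul_def, RingHom.algebraMap_toAlgebra, aevalAdicCompletion_C,
        AdicCompletion.algebraMap_apply, ← hg]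
    · exact hspan ▸ Submodule.fg_span (Set.finite_range y)
  simpa using Submodule.add_mem_sup hw hzw

end MvPowerSeries

theorem stmt3_general (A : Type) [CommRing A]
    (T : Type) [CommRing T] [Algebra A T]
    (I : Ideal T) [Module.Finite A (T ⧸ I)]
    (n : ℕ) (y : Fin n → T) (hy : Ideal.span (Set.range y) = I) :
    ∃ f : MvPowerSeries (Fin n) A →+* AdicCompletion I T,
      (∀ a : A, f ((MvPowerSeries.C : A →+* MvPowerSeries (Fin n) A) a) =
          algebraMap T (AdicCompletion I T) (algebraMap A T a)) ∧
      (∀ i : Fin n, f (MvPowerSeries.X i) = algebraMap T (AdicCompletion I T) (y i)) ∧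
      (∀ t : ℕ, ∀ F ∈ (Ideal.span
          (Set.range (MvPowerSeries.X : Fin n → MvPowerSeries (Fin n) A))) ^ t,
        AdicCompletion.evalₐ I t (f F) = 0) ∧
      f.Finite := by
  have hyI : ∀ i, y i ∈ I := fun i => hy ▸ Ideal.subset_span (Set.mem_range_self i)
  exact ⟨MvPowerSeries.aevalAdicCompletion y hyI, MvPowerSeries.aevalAdicCompletion_C hyI,
    MvPowerSeries.aevalAdicCompletion_X hyI,
    fun _ _ hF => MvPowerSeries.evalₐ_aevalAdicCompletion_eq_zero hyI hF,
    MvPowerSeries.aevalAdicCompletion_finite hyI hy.ge⟩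

/-- **Finiteness of the completion over a power series ring.**  Let `A` be Noetherian, `T` a
Noetherian `A`-algebra and `I = (y₁, …, yₙ) ⊆ T` an ideal with `T/I` a finitely generated
`A`-module.  Then the evaluation `A[x₁,…,xₙ] → T`, `xᵢ ↦ yᵢ`, induces a (necessarily unique)
continuous ring homomorphism `A[[x₁,…,xₙ]] → T̂ = lim_t T/Iᵗ`, and this homomorphism is finite.

Continuity is expressed by (iii): for each `t`, the composite of `f` with the projection
`T̂ → T/Iᵗ` kills `(x₁,…,xₙ)ᵗ`; conditions (i)–(iii) uniquely determine `f`. -/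
theorem stmt3 (A : Type) [CommRing A] [IsNoetherianRing A]
    (T : Type) [CommRing T] [Algebra A T] [IsNoetherianRing T]
    (I : Ideal T) [Module.Finite A (T ⧸ I)]
    (n : ℕ) (y : Fin n → T) (hy : Ideal.span (Set.range y) = I) :
    ∃ f : MvPowerSeries (Fin n) A →+* AdicCompletion I T,
      (∀ a : A, f ((MvPowerSeries.C : A →+* MvPowerSeries (Fin n) A) a) =
          algebraMap T (AdicCompletion I T) (algebraMap A T a)) ∧
      (∀ i : Fin n, f (MvPowerSeries.X i) = algebraMap T (AdicCompletion I T) (y i)) ∧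
      (∀ t : ℕ, ∀ F ∈ (Ideal.span
          (Set.range (MvPowerSeries.X : Fin n → MvPowerSeries (Fin n) A))) ^ t,
        AdicCompletion.evalₐ I t (f F) = 0) ∧
      f.Finite :=
  stmt3_general A T I n y hy
end

section
/- Let A be a Noetherian commutative ring, let T be a Noetherian A-algebra, and let I ⊆ T be an ideal generated by elements y_1, ..., y_n such that T/I is a finitely generated A-module. Let t_1, ..., t_d ∈ T be elements whose classes modulo I generate T/I as an A-module. Then for every t ≥ 1, the classes of t_1, ..., t_d in T/I^t generate T/I^t as a module over A[x_1, ..., x_n]/(x_1, ..., x_n)^t, via the ring homomorphism A[x_1, ..., x_n]/(x_1, ..., x_n)^t → T/I^t induced by x_i ↦ y_i. -/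
/-!
Make `T` an `A[x₁,…,xₙ]`-algebra via `xᵢ ↦ yᵢ` and let `M` be the `A[x]`-span of the `τᵢ` in `T`.
The hypothesis says `T = M + I`. Since `I = (x)·T` and `M` is stable under `(x)ᵏ`,
`Iᵏ = (x)ᵏ·T = (x)ᵏ·M + (x)ᵏ·I ⊆ M + Iᵏ⁺¹`, so by induction `T = M + Iᵗ` for every `t`;
reducing modulo `Iᵗ` gives the claim.
-/

/-- The ring homomorphism `A[x₁,…,xₙ]/(x₁,…,xₙ)ᵗ → T/Iᵗ` induced by `xᵢ ↦ yᵢ`, where the `yᵢ`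
generate the ideal `I`. -/
noncomputable def inducedQuotientMap (A : Type) [CommRing A] (T : Type) [CommRing T]
    [Algebra A T] (I : Ideal T) (n : ℕ) (y : Fin n → T) (hy : Ideal.span (Set.range y) = I)
    (t : ℕ) :
    (MvPolynomial (Fin n) A ⧸
        (Ideal.span (Set.range (MvPolynomial.X : Fin n → MvPolynomial (Fin n) A))) ^ t) →+*
      (T ⧸ I ^ t) :=
  Ideal.Quotient.lift _
    ((Ideal.Quotient.mk (I ^ t)).comp (MvPolynomial.aeval y : MvPolynomial (Fin n) A →ₐ[A] T)) <| by
    intro p hp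
    have h1 : Ideal.map ((MvPolynomial.aeval y : MvPolynomial (Fin n) A →ₐ[A] T) : _ →+* T)
        (Ideal.span (Set.range (MvPolynomial.X : Fin n → MvPolynomial (Fin n) A))) = I := by
      rw [Ideal.map_span, ← hy]
      congr 1
      rw [← Set.range_comp]
      exact congrArg _ (funext fun i => by simp)
    have h2 : MvPolynomial.aeval y p ∈ I ^ t := by
      have h3 := Ideal.mem_map_of_mem
        ((MvPolynomial.aeval y : MvPolynomial (Fin n) A →ₐ[A] T) : _ →+* T) hp
      rwa [Ideal.map_pow, h1] at h3
    show Ideal.Quotient.mk (I ^ t) (MvPolynomial.aeval y p) = 0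
    rwa [Ideal.Quotient.eq_zero_iff_mem]

theorem Submodule.sup_restrictScalars_map_pow_eq_top {R T : Type*} [CommRing R] [CommRing T]
    [Algebra R T] {J : Ideal R} {M : Submodule R T}
    (h : M ⊔ (J.map (algebraMap R T)).restrictScalars R = ⊤) (k : ℕ) :
    M ⊔ ((J.map (algebraMap R T)) ^ k).restrictScalars R = ⊤ := by
  set I := J.map (algebraMap R T)
  induction k with
  | zero => simp
  | succ k ih =>
    have hstep : (I ^ k).restrictScalars R ≤ M ⊔ (I ^ (k + 1)).restrictScalars R :=
      calc (I ^ k).restrictScalars R = J ^ k • (⊤ : Submodule R T) := by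
            rw [Ideal.smul_top_eq_map, Ideal.map_pow]
        _ = J ^ k • M ⊔ J ^ k • I.restrictScalars R := by rw [← h, Submodule.smul_sup]
        _ ≤ M ⊔ (I ^ (k + 1)).restrictScalars R := by
            refine sup_le_sup Submodule.smul_le_right (le_of_eq ?_)
            rw [← Ideal.smul_restrictScalars, Ideal.map_pow, Ideal.smul_eq_mul, pow_succ]
    rw [eq_top_iff, ← ih]
    exact sup_le le_sup_left hstep

theorem Submodule.span_sup_restrictScalars_eq_top_of_span_mk {A T : Type*} [CommRing A]
    [CommRing T] [Algebra A T] {I : Ideal T} {s : Set T}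
    (h : Submodule.span A (Ideal.Quotient.mk I '' s) = ⊤) :
    Submodule.span A s ⊔ I.restrictScalars A = ⊤ := by
  set f := (Ideal.Quotient.mkₐ A I).toLinearMap
  have hker : LinearMap.ker f = I.restrictScalars A := by
    ext x
    simp [f, Ideal.Quotient.eq_zero_iff_mem]
  rw [← hker, ← Submodule.comap_map_eq, Submodule.map_span, show f '' s = Ideal.Quotient.mk I '' s from rfl, h, Submodule.comap_top]

theorem Submodule.span_sup_restrictScalars_eq_top_of_isScalarTower {A R T : Type*} [CommRing A]
    [CommRing R] [CommRing T] [Algebra A R] [Algebra A T] [Algebra R T] [IsScalarTower A R T]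
    {I : Ideal T} {s : Set T} (h : Submodule.span A s ⊔ I.restrictScalars A = ⊤) :
    Submodule.span R s ⊔ I.restrictScalars R = ⊤ := by
  rw [← Submodule.restrictScalars_eq_top_iff A, eq_top_iff, ← h]
  refine sup_le ?_ ?_
  · exact (Submodule.span_le_restrictScalars A _ _).trans
      (Submodule.restrictScalars_mono A le_sup_left)
  · exact Submodule.restrictScalars_mono A (le_sup_right : I.restrictScalars R ≤ _)

theorem Ideal.Quotient.span_mk_image_eq_top_of_sup_eq_top {R T : Type*} [CommRing R] [CommRing T]
    [Algebra R T] {J : Ideal R} {K : Ideal T} (φ : R ⧸ J →+* T ⧸ K)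
    (hφ : ∀ r, φ (Ideal.Quotient.mk J r) = Ideal.Quotient.mk K (algebraMap R T r)) {s : Set T}
    (hs : Submodule.span R s ⊔ K.restrictScalars R = ⊤) :
    @Submodule.span (R ⧸ J) (T ⧸ K) _ _ φ.toModule (Ideal.Quotient.mk K '' s) = ⊤ := by
  let := φ.toModule
  rw [eq_top_iff]
  rintro z -
  obtain ⟨x, rfl⟩ := Ideal.Quotient.mk_surjective z
  obtain ⟨m, hm, k, hk, rfl⟩ := Submodule.mem_sup.1 (hs ▸ Submodule.mem_top : x ∈ _)
  rw [map_add, Ideal.Quotient.eq_zero_iff_mem.2 hk, add_zero]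
  induction hm using Submodule.span_induction with
  | mem x hx => exact Submodule.subset_span ⟨x, hx, rfl⟩
  | zero => simp
  | add a b _ _ ha hb => rw [map_add]; exact add_mem ha hb
  | smul r m _ ih =>
    rw [Algebra.smul_def, map_mul, ← hφ]
    exact Submodule.smul_mem _ (Ideal.Quotient.mk J r) ih

theorem stmt4_general (A : Type) [CommRing A]
    (T : Type) [CommRing T] [Algebra A T]
    (I : Ideal T) (n : ℕ) (y : Fin n → T) (hy : Ideal.span (Set.range y) = I)
    (d : ℕ) (τ : Fin d → T)
    (hτ : Submodule.span A (Set.range fun i => Ideal.Quotient.mk I (τ i)) = ⊤) :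
    ∀ t : ℕ, 1 ≤ t →
      @Submodule.span
        (MvPolynomial (Fin n) A ⧸
          (Ideal.span (Set.range (MvPolynomial.X : Fin n → MvPolynomial (Fin n) A))) ^ t)
        (T ⧸ I ^ t) _ _
        (RingHom.toModule (inducedQuotientMap A T I n y hy t))
        (Set.range fun i => Ideal.Quotient.mk (I ^ t) (τ i)) = ⊤ := by
  intro t _
  let : Algebra (MvPolynomial (Fin n) A) T := (MvPolynomial.aeval y).toAlgebra
  have : IsScalarTower A (MvPolynomial (Fin n) A) T :=
    IsScalarTower.of_algebraMap_eq fun a => ((MvPolynomial.aeval y).commutes a).symm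
  have hJ : (Ideal.span (Set.range MvPolynomial.X)).map
      (algebraMap (MvPolynomial (Fin n) A) T) = I := by
    rw [Ideal.map_span, ← hy, ← Set.range_comp]
    congr 2
    funext i
    exact MvPolynomial.aeval_X y i
  have hR : Submodule.span (MvPolynomial (Fin n) A) (Set.range τ) ⊔
      I.restrictScalars (MvPolynomial (Fin n) A) = ⊤ :=
    Submodule.span_sup_restrictScalars_eq_top_of_isScalarTower
      (Submodule.span_sup_restrictScalars_eq_top_of_span_mk (by rwa [← Set.range_comp']))
  have hTop := Submodule.sup_restrictScalars_map_pow_eq_top (by rwa [hJ]) t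
  rw [hJ] at hTop
  rw [Set.range_comp' (Ideal.Quotient.mk (I ^ t)) τ]
  exact Ideal.Quotient.span_mk_image_eq_top_of_sup_eq_top _ (fun _ => rfl) hTop

/-- **Generators of `T/Iᵗ` over `A[x]/(x)ᵗ`.**  If the classes of `τ₁, …, τ_d` modulo `I`
generate `T/I` as an `A`-module, then for every `t ≥ 1` the classes of the `τᵢ` generate `T/Iᵗ`
as a module over `A[x₁,…,xₙ]/(x₁,…,xₙ)ᵗ` (via the ring map induced by `xᵢ ↦ yᵢ`). -/
theorem stmt4 (A : Type) [CommRing A] [IsNoetherianRing A]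
    (T : Type) [CommRing T] [Algebra A T] [IsNoetherianRing T]
    (I : Ideal T) (n : ℕ) (y : Fin n → T) (hy : Ideal.span (Set.range y) = I)
    [Module.Finite A (T ⧸ I)]
    (d : ℕ) (τ : Fin d → T)
    (hτ : Submodule.span A (Set.range fun i => Ideal.Quotient.mk I (τ i)) = ⊤) :
    ∀ t : ℕ, 1 ≤ t →
      @Submodule.span
        (MvPolynomial (Fin n) A ⧸
          (Ideal.span (Set.range (MvPolynomial.X : Fin n → MvPolynomial (Fin n) A))) ^ t)
        (T ⧸ I ^ t) _ _
        (RingHom.toModule (inducedQuotientMap A T I n y hy t))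
        (Set.range fun i => Ideal.Quotient.mk (I ^ t) (τ i)) = ⊤ :=
  stmt4_general A T I n y hy d τ hτ
end
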